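/- arXiv:1811.02041 — 3 statements merged into one kernel-verified Lean document; each statement's English description precedes it below -/
import Mathlib

section
/- Suppose e : A ⇄ C₁ is a reflection (a Galois connection whose counit is the identity, i.e. ê ∘ ě = 1), s : C₁ ⇄ B is any Galois connection, r : A ⇄ C₂ is a Galois connection, and m : C₂ ⇄ B is a coreflection (unit is the identity), all between partial orders, with e ∘ s = r ∘ m as composed adjunctions. Then there is a unique Galois connection d : C₁ ⇄ C₂ with e ∘ d = r and d ∘ m = s; its left adjoint is ď = ŝ_left ∘ m̂_right = ê_right ∘ ř_left and its right adjoint is d̂ = r̂_right ∘ ě_left = m̌_left ∘ ŝ_right. -/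
/-- Diagonalization for Galois connections between partial orders: given a
commutative square `e ∘ s = r ∘ m` with `e` a reflection and `m` a coreflection,
there is a unique Galois connection `d : C₁ ⇄ C₂` with `e ∘ d = r` and
`d ∘ m = s`; its adjoints are given by the stated formulas. -/
theorem galois_connection_diagonalization
    {A C₁ C₂ B : Type*} [PartialOrder A] [PartialOrder C₁] [PartialOrder C₂] [PartialOrder B]
    {el : A → C₁} {eu : C₁ → A} (he : GaloisConnection el eu)
    (herefl : ∀ y, el (eu y) = y)
    {sl : C₁ → B} {su : B → C₁} (hs : GaloisConnection sl su)
    {rl : A → C₂} {ru : C₂ → A} (hr : GaloisConnection rl ru)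
    {ml : C₂ → B} {mu : B → C₂} (hm : GaloisConnection ml mu)
    (hmcorefl : ∀ x, mu (ml x) = x)
    (hcomm_left : ∀ a, sl (el a) = ml (rl a))
    (hcomm_right : ∀ b, eu (su b) = ru (mu b)) :
    ∃! p : (C₁ → C₂) × (C₂ → C₁),
      GaloisConnection p.1 p.2 ∧
      (∀ a, p.1 (el a) = rl a) ∧ (∀ c, eu (p.2 c) = ru c) ∧
      (∀ c, ml (p.1 c) = sl c) ∧ (∀ b, p.2 (mu b) = su b) ∧
      p.1 = (fun c₁ => mu (sl c₁)) ∧ p.1 = (fun c₁ => rl (eu c₁)) ∧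
      p.2 = (fun c₂ => el (ru c₂)) ∧ p.2 = (fun c₂ => su (ml c₂)) := by
  -- key identities
  have hd1 : ∀ c₁, mu (sl c₁) = rl (eu c₁) := by
    intro c₁
    conv_lhs => rw [← herefl c₁]
    rw [hcomm_left, hmcorefl]
  have hd2 : ∀ c₂, el (ru c₂) = su (ml c₂) := by
    intro c₂
    rw [show ru c₂ = eu (su (ml c₂)) by rw [hcomm_right, hmcorefl], herefl]
  refine ⟨⟨fun c₁ => mu (sl c₁), fun c₂ => el (ru c₂)⟩, ⟨?_, ?_, ?_, ?_, ?_, rfl, ?_, rfl, ?_⟩, ?_⟩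
  · -- Galois connection
    intro c₁ c₂
    simp only [hd1, hd2]
    constructor
    · intro h
      have h1 : eu c₁ ≤ ru c₂ := (hr _ _).mp h
      have h2 : sl c₁ ≤ ml c₂ := by
        calc sl c₁ = sl (el (eu c₁)) := by rw [herefl]
          _ ≤ sl (el (ru c₂)) := hs.monotone_l (he.monotone_l h1)
          _ = ml (rl (ru c₂)) := hcomm_left _
          _ ≤ ml c₂ := hm.monotone_l (hr.l_u_le _)
      exact (hs _ _).mp h2
    · intro h
      have h1 : sl c₁ ≤ ml c₂ := (hs _ _).mpr h
      have h2 : eu c₁ ≤ ru c₂ := by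
        calc eu c₁ ≤ eu (su (ml c₂)) := he.monotone_u h
          _ = ru (mu (ml c₂)) := hcomm_right _
          _ = ru c₂ := by rw [hmcorefl]
      exact (hr _ _).mpr h2
  · intro a
    simp only [hcomm_left, hmcorefl]
  · intro c
    show eu (el (ru c)) = ru c
    rw [hd2, hcomm_right, hmcorefl]
  · intro c
    show ml (mu (sl c)) = sl c
    rw [hd1, ← hcomm_left, herefl]
  · intro b
    show el (ru (mu b)) = su b
    rw [← hcomm_right, herefl]
  · funext c₁; exact hd1 c₁
  · funext c₂; exact hd2 c₂
  · rintro ⟨p1, p2⟩ ⟨_, _, _, _, _, h1, _, h2, _⟩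
    simp only [Prod.mk.injEq]
    exact ⟨h1, h2⟩
end

section
/- Every Galois connection g : A ⇄ B between partial orders factors as a reflection followed by a coreflection through its axis: the poset D(g) = {(a, b) : a is closed, b is open, ǧ(a) = b} (ordered by the first—equivalently second—component) with reflection (ξ₀, π₀) : A ⇄ D(g) given by ξ₀(a) = (ĝ(ǧ(a)), ǧ(a)) and π₀(a, b) = a, and coreflection (π₁, ξ₁) : D(g) ⇄ B given by π₁(a, b) = b and ξ₁(b) = (ĝ(b), ǧ(ĝ(b))), such that g = (ξ₀, π₀) ∘ (π₁, ξ₁). -/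
variable {A B : Type*} [PartialOrder A] [PartialOrder B]

/-- The axis (set of bipoles) of a pair of maps `l : A → B`, `u : B → A`:
pairs `(a, b)` with `a` closed, `b` open and `l a = b`. -/
def Axis (l : A → B) (u : B → A) : Type _ :=
  {p : A × B // u (l p.1) = p.1 ∧ l (u p.2) = p.2 ∧ l p.1 = p.2}

/-- The axis is ordered by the first component. -/
instance axisPartialOrder (l : A → B) (u : B → A) : PartialOrder (Axis l u) where
  le p q := p.val.1 ≤ q.val.1
  le_refl p := le_refl _
  le_trans p q r h₁ h₂ := le_trans h₁ h₂
  le_antisymm p q h₁ h₂ := by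
    apply Subtype.ext
    have h1 : p.val.1 = q.val.1 := le_antisymm h₁ h₂
    have h2 : p.val.2 = q.val.2 := by
      rw [← p.prop.2.2, ← q.prop.2.2, h1]
    exact Prod.ext h1 h2

/-- The source embedding `ξ₀ : A → Axis`. -/
def xi0 {l : A → B} {u : B → A} (h : GaloisConnection l u) (a : A) : Axis l u :=
  ⟨(u (l a), l a), h.u_l_u_eq_u (l a), h.l_u_l_eq_l a, h.l_u_l_eq_l a⟩

/-- The source projection `π₀ : Axis → A`. -/
def pi0 {l : A → B} {u : B → A} (p : Axis l u) : A := p.val.1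

/-- The target projection `π₁ : Axis → B`. -/
def pi1 {l : A → B} {u : B → A} (p : Axis l u) : B := p.val.2

/-- The target embedding `ξ₁ : B → Axis`. -/
def xi1 {l : A → B} {u : B → A} (h : GaloisConnection l u) (b : B) : Axis l u :=
  ⟨(u b, l (u b)), h.u_l_u_eq_u b, h.l_u_l_eq_l (u b), rfl⟩

/-! A point of the axis is determined by its closed first component `a`, its second
component being `l a = l (u (l a))`. Hence `(ξ₀, π₀)` is the closure `u ∘ l` viewed as a map
onto the closed elements, and `(π₁, ξ₁)` is the restriction of `g` to closed and open
elements, along which `l` and `u` are mutually inverse. -/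

namespace Axis

omit [PartialOrder A] [PartialOrder B]

variable {l : A → B} {u : B → A}

theorem u_snd (p : Axis l u) : u p.val.2 = p.val.1 := by
  rw [← p.prop.2.2, p.prop.1]

theorem ext {p q : Axis l u} (h : p.val.1 = q.val.1) : p = q :=
  Subtype.ext (Prod.ext h (by rw [← p.prop.2.2, ← q.prop.2.2, h]))

end Axis

section

variable {l : A → B} {u : B → A} (h : GaloisConnection l u)

theorem xi0_pi0 (p : Axis l u) : xi0 h (pi0 p) = p :=
  Axis.ext p.prop.1

theorem xi1_pi1 (p : Axis l u) : xi1 h (pi1 p) = p :=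
  Axis.ext p.u_snd

theorem galoisConnection_xi0_pi0 : GaloisConnection (xi0 h) pi0 := fun a p =>
  show u (l a) ≤ p.val.1 ↔ a ≤ p.val.1 from
    ⟨(h.le_u_l a).trans, fun hle => p.prop.1 ▸ h.monotone_u (h.monotone_l hle)⟩

theorem galoisConnection_pi1_xi1 : GaloisConnection pi1 (xi1 h) := fun p b => by
  change p.val.2 ≤ b ↔ p.val.1 ≤ u b
  rw [← p.prop.2.2]
  exact h _ _

end

/-- Polar factorization: every Galois connection between partial orders factors
through its axis as a reflection `(ξ₀, π₀)` followed by a coreflection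
`(π₁, ξ₁)`, whose (componentwise) composition recovers the original
Galois connection. -/
theorem polar_factorization {l : A → B} {u : B → A} (h : GaloisConnection l u) :
    GaloisConnection (xi0 h) pi0 ∧
    (∀ p : Axis l u, xi0 h (pi0 p) = p) ∧
    GaloisConnection pi1 (xi1 h) ∧
    (∀ p : Axis l u, xi1 h (pi1 p) = p) ∧
    (∀ a : A, pi1 (xi0 h a) = l a) ∧
    (∀ b : B, pi0 (xi1 h b) = u b) :=
  ⟨galoisConnection_xi0_pi0 h, xi0_pi0 h, galoisConnection_pi1_xi1 h, xi1_pi1 h,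
    fun _ => rfl, fun _ => rfl⟩
end

section
/- The classes of reflections and coreflections form a factorization system on the category of partial orders and Galois connections: every Galois connection factors as a reflection followed by a coreflection (the polar factorization), reflections and coreflections contain isomorphisms and are closed under composition, and the unique diagonalization property holds for commutative squares with a reflection on the left and a coreflection on the right. -/
open CategoryTheory

/-- An object of the category of partial orders and Galois connections. -/
structure GCPos where
  α : Type
  [str : PartialOrder α]

attribute [instance] GCPos.str

/-- A morphism of `GCPos`: a Galois connection. -/
@[ext]
structure GCHom (X Y : GCPos) where
  l : X.α → Y.α
  u : Y.α → X.α
  gc : GaloisConnection l u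

/-- The category of partial orders and Galois connections (composed
componentwise). -/
instance : Category GCPos where
  Hom := GCHom
  id X := ⟨id, id, GaloisConnection.id⟩
  comp f g := ⟨g.l ∘ f.l, f.u ∘ g.u, f.gc.compose g.gc⟩
  id_comp f := by cases f; rfl
  comp_id f := by cases f; rfl
  assoc f g h := by cases f; cases g; cases h; rfl

/-- A reflection: a Galois connection whose interior `ǧ ∘ ĝ` is the identity. -/
def IsReflection {X Y : GCPos} (f : X ⟶ Y) : Prop := ∀ y, f.l (f.u y) = y

/-- A coreflection: a Galois connection whose closure `ĝ ∘ ǧ` is the identity. -/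
def IsCoreflection {X Y : GCPos} (f : X ⟶ Y) : Prop := ∀ x, f.u (f.l x) = x

/-!
A Galois connection `l ⊣ u` between partial orders satisfies `l ∘ u ∘ l = l`, so it is a
reflection iff `l` is surjective and a coreflection iff `l` is injective; in particular
isomorphisms are both. Since a morphism is determined by either of its adjoints, reflections
are epimorphisms and coreflections monomorphisms, which makes diagonals unique. The polar
factorization of `f` passes through the fixed points of the closure operator `f.u ∘ f.l`, and
the diagonal of a square `e ≫ s = r ≫ m` is `(r.l ∘ e.u, s.u ∘ m.l)`.
-/

open Function

namespace GCHom

variable {X Y : GCPos}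

lemma ext_l {f g : X ⟶ Y} (h : f.l = g.l) : f = g :=
  GCHom.ext h (funext fun _ => f.gc.u_unique g.gc (congrFun h))

lemma ext_u {f g : X ⟶ Y} (h : f.u = g.u) : f = g :=
  GCHom.ext (funext fun _ => f.gc.l_unique g.gc (congrFun h)) h

end GCHom

section Classes

variable {X Y Z : GCPos}

lemma isReflection_iff_surjective_l (f : X ⟶ Y) : IsReflection f ↔ Surjective f.l := by
  refine ⟨LeftInverse.surjective, fun hl y => ?_⟩
  obtain ⟨x, rfl⟩ := hl y
  exact f.gc.l_u_l_eq_l x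

lemma isCoreflection_iff_injective_l (f : X ⟶ Y) : IsCoreflection f ↔ Function.Injective f.l :=
  ⟨LeftInverse.injective, fun hl x => hl (f.gc.l_u_l_eq_l x)⟩

lemma GCHom.bijective_l_of_isIso (f : X ⟶ Y) [IsIso f] : Bijective f.l :=
  ⟨LeftInverse.injective (g := (inv f).l) (congrFun (congrArg GCHom.l (IsIso.hom_inv_id f))),
    RightInverse.surjective (g := (inv f).l) (congrFun (congrArg GCHom.l (IsIso.inv_hom_id f)))⟩

lemma IsReflection.of_isIso (f : X ⟶ Y) [IsIso f] : IsReflection f :=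
  (isReflection_iff_surjective_l f).2 (GCHom.bijective_l_of_isIso f).2

lemma IsCoreflection.of_isIso (f : X ⟶ Y) [IsIso f] : IsCoreflection f :=
  (isCoreflection_iff_injective_l f).2 (GCHom.bijective_l_of_isIso f).1

lemma IsReflection.comp {f : X ⟶ Y} {g : Y ⟶ Z} (hf : IsReflection f) (hg : IsReflection g) :
    IsReflection (f ≫ g) :=
  LeftInverse.comp hf hg

lemma IsCoreflection.comp {f : X ⟶ Y} {g : Y ⟶ Z} (hf : IsCoreflection f)
    (hg : IsCoreflection g) : IsCoreflection (f ≫ g) :=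
  LeftInverse.comp hg hf

lemma IsReflection.epi {e : X ⟶ Y} (he : IsReflection e) : Epi e :=
  ⟨fun _ _ h =>
    GCHom.ext_l ((LeftInverse.surjective he).injective_comp_right (congrArg GCHom.l h))⟩

lemma IsCoreflection.mono {m : Y ⟶ Z} (hm : IsCoreflection m) : Mono m :=
  ⟨fun _ _ h =>
    GCHom.ext_u ((LeftInverse.surjective hm).injective_comp_right (congrArg GCHom.u h))⟩

end Classes

namespace GCHom

variable {X Y : GCPos} (f : X ⟶ Y)

def closeds : GCPos := ⟨f.gc.closureOperator.Closeds⟩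

def toCloseds : X ⟶ f.closeds :=
  ⟨f.gc.closureOperator.toCloseds, Subtype.val, f.gc.closureOperator.gi.gc⟩

def ofCloseds : f.closeds ⟶ Y where
  l z := f.l z.1
  u y := ⟨f.u y, f.gc.closureOperator.isClosed_iff.2 (f.gc.u_l_u_eq_u y)⟩
  gc z y := f.gc z.1 y

lemma isReflection_toCloseds : IsReflection f.toCloseds :=
  f.gc.closureOperator.gi.l_u_eq

lemma isCoreflection_ofCloseds : IsCoreflection f.ofCloseds :=
  fun z => Subtype.ext (f.gc.closureOperator.isClosed_iff.1 z.2)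

lemma toCloseds_comp_ofCloseds : f.toCloseds ≫ f.ofCloseds = f :=
  ext_u rfl

end GCHom

section Diagonal

variable {X Y Z W : GCPos} {e : X ⟶ Y} {m : Z ⟶ W} {r : X ⟶ Z} {s : Y ⟶ W}

def diagonal (he : IsReflection e) (hm : IsCoreflection m) (hsq : e ≫ s = r ≫ m) : Y ⟶ Z where
  l := r.l ∘ e.u
  u := s.u ∘ m.l
  gc y z := by
    have hl : s.l ∘ e.l = m.l ∘ r.l := congrArg GCHom.l hsq
    have hu : e.u ∘ s.u = r.u ∘ m.u := congrArg GCHom.u hsq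
    constructor
    · intro h
      refine s.gc.le_u ?_
      calc s.l y = s.l (e.l (e.u y)) := by rw [he y]
        _ = m.l (r.l (e.u y)) := congrFun hl _
        _ ≤ m.l z := m.gc.monotone_l h
    · intro h
      refine r.gc.l_le ?_
      calc e.u y ≤ e.u (s.u (m.l z)) := e.gc.monotone_u h
        _ = r.u (m.u (m.l z)) := congrFun hu _
        _ = r.u z := by rw [hm z]

lemma diagonal_comp (he : IsReflection e) (hm : IsCoreflection m) (hsq : e ≫ s = r ≫ m) :
    diagonal he hm hsq ≫ m = s := by
  refine GCHom.ext_l (funext fun y => ?_)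
  calc m.l (r.l (e.u y)) = s.l (e.l (e.u y)) := (congrFun (congrArg GCHom.l hsq) _).symm
    _ = s.l y := by rw [he y]

lemma comp_diagonal (he : IsReflection e) (hm : IsCoreflection m) (hsq : e ≫ s = r ≫ m) :
    e ≫ diagonal he hm hsq = r := by
  have := hm.mono
  rw [← cancel_mono m, Category.assoc, diagonal_comp, hsq]

end Diagonal

/-- Reflections and coreflections form a factorization system on the category
of partial orders and Galois connections: both classes contain all isomorphisms
and are closed under composition, every Galois connection factors as a
reflection followed by a coreflection (polar factorization), and unique
diagonalization holds. -/
theorem reflection_coreflection_factorization_system :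
    (∀ {X Y : GCPos} (f : X ⟶ Y), IsIso f → IsReflection f ∧ IsCoreflection f) ∧
    (∀ {X Y Z : GCPos} (f : X ⟶ Y) (g : Y ⟶ Z),
      IsReflection f → IsReflection g → IsReflection (f ≫ g)) ∧
    (∀ {X Y Z : GCPos} (f : X ⟶ Y) (g : Y ⟶ Z),
      IsCoreflection f → IsCoreflection g → IsCoreflection (f ≫ g)) ∧
    (∀ {X Y : GCPos} (f : X ⟶ Y), ∃ (Z : GCPos) (e : X ⟶ Z) (m : Z ⟶ Y),
      IsReflection e ∧ IsCoreflection m ∧ e ≫ m = f) ∧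
    (∀ {X Y Z W : GCPos} (e : X ⟶ Y) (m : Z ⟶ W) (r : X ⟶ Z) (s : Y ⟶ W),
      IsReflection e → IsCoreflection m → e ≫ s = r ≫ m →
      ∃! d : Y ⟶ Z, e ≫ d = r ∧ d ≫ m = s) := by
  refine ⟨fun f _ => ⟨.of_isIso f, .of_isIso f⟩, fun _ _ => IsReflection.comp,
    fun _ _ => IsCoreflection.comp, fun f => ⟨f.closeds, f.toCloseds, f.ofCloseds,
      f.isReflection_toCloseds, f.isCoreflection_ofCloseds, f.toCloseds_comp_ofCloseds⟩,
    fun e m r s he hm hsq => ?_⟩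
  have := he.epi
  refine ⟨diagonal he hm hsq, ⟨comp_diagonal he hm hsq, diagonal_comp he hm hsq⟩, ?_⟩
  rintro d ⟨hd, -⟩
  exact (cancel_epi e).1 (hd.trans (comp_diagonal he hm hsq).symm)
end
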